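/- Fix real constants m > 0, k ≠ 0, M > 0, set Ñ₁ = 1, Ñ₂ = M, Ñ₃ = 1, and fix natural numbers i, h, l. On the open set {I₁,I₂,I₃ > 0} ⊂ ℝ⁶ with coordinates (I₁,I₂,I₃,φ¹,φ²,φ³), define the vector fields Γ'_{ih} = (1/(3+i)) Σ_{j=1}^3 Ñ_j^h I_j^{h+1} (∂/∂I_j + ∂/∂φ^j) and X'_l = mk² I₃^{l−3} ∂/∂φ³. Then the Lie derivative satisfies L_{Γ'_{ih}}(X'_l) = [Γ'_{ih}, X'_l] = −((3 − l)/(3+i)) X'_{l+h}. -/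

import Mathlib

open scoped BigOperators

/-- Phase space with Delaunay-type coordinates `z.1 = (I₁,I₂,I₃)` and
angles `z.2 = (φ¹,φ²,φ³)`. -/
abbrev PhaseSpace := (Fin 3 → ℝ) × (Fin 3 → ℝ)

/-- Lie bracket of vector fields:
`[X,Y](z) = (DY)(z)·X(z) − (DX)(z)·Y(z)`. -/
noncomputable def lieB (X Y : PhaseSpace → PhaseSpace) (z : PhaseSpace) : PhaseSpace :=
  fderiv ℝ Y z (X z) - fderiv ℝ X z (Y z)

/-- The constants `Ñ₁ = 1, Ñ₂ = M, Ñ₃ = 1`. -/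
noncomputable def Ntil (M : ℝ) : Fin 3 → ℝ := ![1, M, 1]

/-- The vector fields `Γ'_{ih} = (1/(3+i)) Σ_j Ñ_j^h I_j^{h+1} (∂/∂I_j + ∂/∂φ^j)`. -/
noncomputable def Gam' (M : ℝ) (i h : ℕ) (z : PhaseSpace) : PhaseSpace :=
  ((fun j => (1 / (3 + (i : ℝ))) * (Ntil M j) ^ h * (z.1 j) ^ (h + 1)),
   (fun j => (1 / (3 + (i : ℝ))) * (Ntil M j) ^ h * (z.1 j) ^ (h + 1)))

/-- The vector fields `X'_l = mk² I₃^{l−3} ∂/∂φ³`. -/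
noncomputable def X' (m k : ℝ) (l : ℕ) (z : PhaseSpace) : PhaseSpace :=
  (0, Pi.single 2 (m * k ^ 2 * (z.1 2) ^ ((l : ℝ) - 3)))

/-!
`Γ'_{ih}` depends on the actions `I` only, while `X'_l` points in the angle direction `∂/∂φ³`;
hence `DΓ'·X'_l = 0`, and the bracket reduces to the derivative of the coefficient
`mk² I₃^{l−3}` along the `∂/∂I₃`-component `I₃^{h+1}/(3+i)` of `Γ'_{ih}`, which is
`(l−3)/(3+i) · mk² I₃^{l+h−3}`.
-/

open ContinuousLinearMap

lemma fderiv_comp_fst_apply_of_fst_eq_zero {𝕜 E F G : Type*} [NontriviallyNormedField 𝕜]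
    [NormedAddCommGroup E] [NormedSpace 𝕜 E] [NormedAddCommGroup F] [NormedSpace 𝕜 F]
    [NormedAddCommGroup G] [NormedSpace 𝕜 G] {g : E → G} {x : E × F}
    (hg : DifferentiableAt 𝕜 g x.1) {v : E × F} (hv : v.1 = 0) :
    fderiv 𝕜 (fun p : E × F => g p.1) x v = 0 := by
  rw [show (fun p : E × F => g p.1) = g ∘ Prod.fst from rfl,
    (hg.hasFDerivAt.comp x hasFDerivAt_fst).fderiv]
  simp [hv]

/-- The coordinate vector field `∂/∂φʲ`. -/
def angleBasis (j : Fin 3) : PhaseSpace := (0, Pi.single j 1)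

lemma X'_eq_smul_angleBasis (m k : ℝ) (l : ℕ) :
    X' m k l = fun z => (m * k ^ 2 * z.1 2 ^ ((l : ℝ) - 3)) • angleBasis 2 := by
  funext z
  ext j
  · simp [X', angleBasis]
  · simp [X', angleBasis, Pi.single_apply]

lemma fderiv_X'_apply (m k : ℝ) (l : ℕ) {z : PhaseSpace} (hz : 0 < z.1 2) (v : PhaseSpace) :
    fderiv ℝ (X' m k l) z v
      = (m * k ^ 2 * (((l : ℝ) - 3) * z.1 2 ^ ((l : ℝ) - 3 - 1)) * v.1 2) • angleBasis 2 := by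
  have hI₃ : HasFDerivAt (fun w : PhaseSpace => w.1 2)
      ((proj 2).comp (fst ℝ (Fin 3 → ℝ) (Fin 3 → ℝ))) z :=
    ((proj 2).comp (fst ℝ (Fin 3 → ℝ) (Fin 3 → ℝ))).hasFDerivAt
  have hX := ((hI₃.rpow_const (p := (l : ℝ) - 3) (Or.inl hz.ne')).const_mul
    (m * k ^ 2)).smul_const (angleBasis 2)
  rw [X'_eq_smul_angleBasis, hX.fderiv]
  simp [mul_assoc]

lemma fderiv_Gam'_apply_of_fst_eq_zero (M : ℝ) (i h : ℕ) (z : PhaseSpace) {v : PhaseSpace}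
    (hv : v.1 = 0) : fderiv ℝ (Gam' M i h) z v = 0 := by
  change fderiv ℝ (fun p : PhaseSpace => Gam' M i h (p.1, 0)) z v = 0
  exact fderiv_comp_fst_apply_of_fst_eq_zero (g := fun I => Gam' M i h (I, 0))
    (by unfold Gam'; fun_prop) hv

theorem stmt18_general (m k M : ℝ) (i h l : ℕ) :
    ∀ z : PhaseSpace, (∀ j : Fin 3, 0 < z.1 j) →
      lieB (Gam' M i h) (X' m k l) z
        = (-(((3 : ℝ) - (l : ℝ)) / (3 + (i : ℝ)))) • X' m k (l + h) z := by
  intro z hz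
  have hpow : z.1 2 ^ ((l : ℝ) - 3 - 1) * z.1 2 ^ (h + 1) = z.1 2 ^ (((l + h : ℕ) : ℝ) - 3) := by
    rw [← Real.rpow_natCast, ← Real.rpow_add (hz 2)]
    push_cast
    ring_nf
  rw [lieB, fderiv_X'_apply m k l (hz 2),
    fderiv_Gam'_apply_of_fst_eq_zero M i h z (by simp [X']), sub_zero, X'_eq_smul_angleBasis,
    smul_smul]
  congr 1
  simp only [Gam', Ntil, Matrix.cons_val_two, Matrix.tail_cons, Matrix.head_cons, one_pow, mul_one]
  rw [← hpow]
  field_simp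
  ring

/-- `L_{Γ'_{ih}}(X'_l) = [Γ'_{ih}, X'_l] = −((3−l)/(3+i)) X'_{l+h}`
on `{I₁,I₂,I₃ > 0}`. -/
theorem stmt18 (m k M : ℝ) (hm : 0 < m) (hk : k ≠ 0) (hM : 0 < M) (i h l : ℕ) :
    ∀ z : PhaseSpace, (∀ j : Fin 3, 0 < z.1 j) →
      lieB (Gam' M i h) (X' m k l) z
        = (-(((3 : ℝ) - (l : ℝ)) / (3 + (i : ℝ)))) • X' m k (l + h) z :=
  stmt18_general m k M i h l
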